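/- There exists an absolute constant C₀ > 0 such that for all integers s ≥ 2, 1 ≤ a < b, every nonempty digit set 𝒟 ⊆ {0,1,…,s−1}, and every nonzero ξ ∈ ℤ: |𝔅*(ξ) − 1| ≤ C₀ min(1, |ξ|/s^a), and consequently, for every ε ∈ (0,1), the function 𝔴₁(ξ) := ε · 1̂(ξ s^{−b}) · (𝔅*(ξ) − 1) satisfies |𝔴₁(ξ)| ≤ C₀ · min(1, s^b/|ξ|) · min(1, |ξ|/s^a), uniformly in ε. -/

import Mathlib

/-! 𝔅*(ξ) is the average of `e(ξℓ/s^b)` over the `r^(b-a)` elements of 𝕃*, all below `s^(b-a)`,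
so every phase satisfies `|ξℓ/s^b| ≤ |ξ|/s^a` and `|e(ξℓ/s^b) - 1| ≤ 2π min(1, |ξ|/s^a)`; averaging
keeps this bound. The second estimate adds `|1̂(θ)| ≤ min(1, 1/|θ|)`, read off from
`1̂(θ) = (1 - e(θ))/(2πiθ)`. -/

open Finset

/-- `e(y) = exp(-2πi y)`. -/
noncomputable def eneg (y : ℝ) : ℂ := Complex.exp (-(2 * Real.pi * Complex.I * (y : ℂ)))

/-- `1̂(θ) = ∫₀¹ e(xθ) dx`. -/
noncomputable def oneHat (θ : ℝ) : ℂ := ∫ x in (0:ℝ)..1, eneg (x * θ)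

/-- The `j`-th base-`s` digit of the natural number `n`. -/
def digitOf (s n j : ℕ) : ℕ := n / s ^ j % s

/-- `𝔄(ξ; N, s, a) = N⁻¹ Σ_{k<N} e(ξ k s^{-a})`. -/
noncomputable def Afun (N s a : ℕ) (ξ : ℤ) : ℂ :=
  (N : ℂ)⁻¹ * ∑ k ∈ Finset.range N, eneg ((ξ : ℝ) * k / (s : ℝ) ^ a)

/-- `ℭ(ξ) = s^{a-b} Σ_{ℓ < s^{b-a}} e(ξ ℓ s^{-b})`. -/
noncomputable def Cfun (s a b : ℕ) (ξ : ℤ) : ℂ :=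
  (((s : ℝ) ^ a / (s : ℝ) ^ b : ℝ) : ℂ) *
    ∑ ℓ ∈ Finset.range (s ^ (b - a)), eneg ((ξ : ℝ) * ℓ / (s : ℝ) ^ b)

/-- `𝕃*`: the set of `ℓ < s^{b-a}` all of whose `b-a` base-`s` digits lie in `D`. -/
def Lstar (s a b : ℕ) (D : Finset ℕ) : Finset ℕ :=
  (Finset.range (s ^ (b - a))).filter fun ℓ => ∀ j < b - a, digitOf s ℓ j ∈ D

/-- `𝔅*(ξ) = r^{a-b} Σ_{ℓ ∈ 𝕃*} e(ξ ℓ s^{-b})`, where `r = #D`. -/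
noncomputable def Bstar (s a b : ℕ) (D : Finset ℕ) (ξ : ℤ) : ℂ :=
  (((D.card : ℝ) ^ a / (D.card : ℝ) ^ b : ℝ) : ℂ) *
    ∑ ℓ ∈ Lstar s a b D, eneg ((ξ : ℝ) * ℓ / (s : ℝ) ^ b)

/-- `g(ξ, k; s, 𝒜) = (#𝒜)⁻¹ Σ_{d ∈ 𝒜} e(ξ d s^{-k})`. -/
noncomputable def gfun (s : ℕ) (A : Finset ℕ) (ξ : ℤ) (k : ℕ) : ℂ :=
  (A.card : ℂ)⁻¹ * ∑ d ∈ A, eneg ((ξ : ℝ) * d / (s : ℝ) ^ k)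

open Real
open scoped BigOperators

lemma digitOf_zero (s n : ℕ) : digitOf s n 0 = n % s := by
  simp [digitOf]

lemma digitOf_succ (s n j : ℕ) : digitOf s n (j + 1) = digitOf s (n / s) j := by
  rw [digitOf, digitOf, pow_succ', Nat.div_div_eq_div_mul]

lemma mem_filter_digitOf_succ {s : ℕ} (hs : 0 < s) (D : Finset ℕ) (n ℓ : ℕ) :
    ℓ ∈ (range (s ^ (n + 1))).filter (fun ℓ => ∀ j < n + 1, digitOf s ℓ j ∈ D) ↔
      ℓ % s ∈ D ∧ ℓ / s ∈ (range (s ^ n)).filter (fun ℓ => ∀ j < n, digitOf s ℓ j ∈ D) := by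
  simp only [mem_filter, mem_range, Nat.forall_lt_succ_left, digitOf_zero, digitOf_succ,
    pow_succ, ← Nat.div_lt_iff_lt_mul hs]
  tauto

lemma card_filter_digitOf_mem {s : ℕ} (hs : 0 < s) {D : Finset ℕ} (hD : D ⊆ range s) (n : ℕ) :
    #((range (s ^ n)).filter fun ℓ => ∀ j < n, digitOf s ℓ j ∈ D) = #D ^ n := by
  induction n with
  | zero => simp
  | succ n ih =>
    rw [pow_succ' #D, ← ih, ← card_product]
    have hdiv {d m : ℕ} (hd : d ∈ D) : (d + s * m) % s = d ∧ (d + s * m) / s = m := by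
      have hds : d < s := mem_range.mp (hD hd)
      refine ⟨by rw [Nat.add_mul_mod_self_left, Nat.mod_eq_of_lt hds], ?_⟩
      rw [Nat.add_mul_div_left _ _ hs, Nat.div_eq_of_lt hds, zero_add]
    refine card_nbij' (fun ℓ => (ℓ % s, ℓ / s)) (fun p => p.1 + s * p.2) ?_ ?_ ?_ ?_
    · intro ℓ hℓ
      rw [mem_coe, mem_filter_digitOf_succ hs] at hℓ
      exact mem_product.mpr hℓ
    · rintro ⟨d, m⟩ hp
      obtain ⟨hd, hm⟩ := mem_product.mp hp
      rw [mem_coe, mem_filter_digitOf_succ hs, (hdiv hd).1, (hdiv hd).2]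
      exact ⟨hd, hm⟩
    · intro ℓ _
      exact Nat.mod_add_div ℓ s
    · rintro ⟨d, m⟩ hp
      obtain ⟨hd, -⟩ := mem_product.mp hp
      exact Prod.ext (hdiv hd).1 (hdiv hd).2

lemma eneg_eq_exp_I_mul (y : ℝ) : eneg y = Complex.exp (Complex.I * ((-(2 * π * y) : ℝ) : ℂ)) := by
  rw [eneg]; push_cast; ring_nf

lemma norm_eneg (y : ℝ) : ‖eneg y‖ = 1 := by
  rw [eneg_eq_exp_I_mul, mul_comm, Complex.norm_exp_ofReal_mul_I]

lemma norm_eneg_sub_one_le_two (y : ℝ) : ‖eneg y - 1‖ ≤ 2 := by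
  calc ‖eneg y - 1‖ ≤ ‖eneg y‖ + ‖(1 : ℂ)‖ := norm_sub_le _ _
    _ = 2 := by rw [norm_eneg, norm_one]; norm_num

lemma norm_eneg_sub_one_le (y : ℝ) : ‖eneg y - 1‖ ≤ 2 * π * min 1 |y| := by
  rw [mul_min_of_nonneg _ _ (by positivity), mul_one]
  refine le_min ?_ ?_
  · linarith [norm_eneg_sub_one_le_two y, pi_gt_three]
  · calc ‖eneg y - 1‖ ≤ ‖-(2 * π * y)‖ := by
          rw [eneg_eq_exp_I_mul]; exact norm_exp_I_mul_ofReal_sub_one_le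
      _ = 2 * π * |y| := by rw [norm_neg, Real.norm_eq_abs, abs_mul, abs_of_pos two_pi_pos]

lemma oneHat_eq_of_ne_zero {θ : ℝ} (hθ : θ ≠ 0) :
    oneHat θ = (1 - eneg θ) / (2 * π * Complex.I * θ) := by
  have hc : -(2 * π * Complex.I * θ) ≠ 0 := by simp [hθ, pi_ne_zero]
  have h := integral_exp_mul_complex (a := 0) (b := 1) hc
  simp only [Complex.ofReal_one, Complex.ofReal_zero, mul_one, mul_zero, Complex.exp_zero] at h
  rw [div_neg, ← neg_div, neg_sub] at h
  rw [oneHat]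
  convert h using 2
  · ext x; rw [eneg]; push_cast; ring_nf
  · rw [eneg]

lemma norm_oneHat_le (θ : ℝ) (hθ : θ ≠ 0) : ‖oneHat θ‖ ≤ min 1 |θ|⁻¹ := by
  refine le_min ?_ ?_
  · simpa [oneHat, norm_eneg] using
      intervalIntegral.norm_integral_le_of_norm_le_const (a := 0) (b := 1) (C := 1)
        (f := fun x : ℝ => eneg (x * θ)) fun x _ => (norm_eneg _).le
  · have hden : ‖2 * π * Complex.I * (θ : ℂ)‖ = 2 * π * |θ| := by
      simp [abs_of_pos pi_pos]
    have hθ' : 0 < |θ| := abs_pos.mpr hθ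
    rw [oneHat_eq_of_ne_zero hθ, norm_div, hden, div_le_iff₀ (by positivity)]
    calc ‖1 - eneg θ‖ ≤ 2 := norm_sub_rev (1 : ℂ) (eneg θ) ▸ norm_eneg_sub_one_le_two θ
      _ ≤ |θ|⁻¹ * (2 * π * |θ|) := by
        rw [mul_comm, mul_assoc, mul_inv_cancel₀ hθ'.ne']; linarith [pi_gt_three]

lemma RCLike.norm_expect_sub_le {ι 𝕜 : Type*} [RCLike 𝕜] {S : Finset ι} (hS : S.Nonempty)
    {f : ι → 𝕜} {c : 𝕜} {M : ℝ} (h : ∀ i ∈ S, ‖f i - c‖ ≤ M) : ‖𝔼 i ∈ S, f i - c‖ ≤ M := by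
  calc ‖𝔼 i ∈ S, f i - c‖ = ‖𝔼 i ∈ S, (f i - c)‖ := by rw [expect_sub_distrib, expect_const hS]
    _ ≤ 𝔼 i ∈ S, ‖f i - c‖ := RCLike.norm_expect_le (K := 𝕜)
    _ ≤ M := expect_le hS h

section Bstar

variable {s a b : ℕ} {D : Finset ℕ}

lemma card_Lstar (hs : 0 < s) (hD : D ⊆ range s) : #(Lstar s a b D) = #D ^ (b - a) :=
  card_filter_digitOf_mem hs hD (b - a)

lemma Bstar_eq_expect (hs : 0 < s) (hab : a ≤ b) (hD : D ⊆ range s) (hDne : D.Nonempty)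
    (ξ : ℤ) : Bstar s a b D ξ = 𝔼 ℓ ∈ Lstar s a b D, eneg ((ξ : ℝ) * ℓ / (s : ℝ) ^ b) := by
  have hr : (#D : ℝ) ≠ 0 := by exact_mod_cast hDne.card_pos.ne'
  have hscale : (#D : ℝ) ^ a / (#D : ℝ) ^ b = ((#D ^ (b - a) : ℕ) : ℝ)⁻¹ := by
    rw [Nat.cast_pow, ← Nat.add_sub_cancel' hab, pow_add, Nat.add_sub_cancel_left,
      div_mul_cancel_left₀ (pow_ne_zero _ hr)]
  rw [Bstar, expect_eq_sum_div_card, card_Lstar hs hD, hscale, div_eq_inv_mul]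
  push_cast
  rfl

lemma norm_Bstar_sub_one_le (hs : 0 < s) (hab : a ≤ b) (hD : D ⊆ range s) (hDne : D.Nonempty)
    (ξ : ℤ) : ‖Bstar s a b D ξ - 1‖ ≤ 2 * π * min 1 (|(ξ : ℝ)| / (s : ℝ) ^ a) := by
  have hL : (Lstar s a b D).Nonempty := by
    rw [← card_pos, card_Lstar hs hD]; exact pow_pos hDne.card_pos _
  rw [Bstar_eq_expect hs hab hD hDne]
  refine RCLike.norm_expect_sub_le hL fun ℓ hℓ => (norm_eneg_sub_one_le _).trans ?_
  have hℓ : (ℓ : ℝ) ≤ (s : ℝ) ^ (b - a) := by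
    exact_mod_cast (mem_range.mp (mem_filter.mp hℓ).1).le
  have hs' : (0 : ℝ) < s := by exact_mod_cast hs
  have hphase : |(ξ : ℝ) * ℓ / (s : ℝ) ^ b| ≤ |(ξ : ℝ)| / (s : ℝ) ^ a := by
    rw [abs_div, abs_mul, Nat.abs_cast, abs_of_pos (pow_pos hs' b), ← Nat.add_sub_cancel' hab,
      pow_add, mul_div_mul_comm]
    exact mul_le_of_le_one_right (by positivity) (div_le_one_of_le₀ hℓ (by positivity))
  gcongr

end Bstar

/-- Lemma 9.3 (Pramanik–Zhang): there is an absolute constant `C₀ > 0` such that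
`|𝔅*(ξ) − 1| ≤ C₀ min(1, |ξ|/s^a)`, and consequently
`𝔴₁(ξ) = ε 1̂(ξ s^{−b})(𝔅*(ξ) − 1)` satisfies
`|𝔴₁(ξ)| ≤ C₀ min(1, s^b/|ξ|) min(1, |ξ|/s^a)` uniformly in `ε ∈ (0,1)`. -/
theorem Bstar_sub_one_estimate :
    ∃ C₀ : ℝ, 0 < C₀ ∧
      ∀ s a b : ℕ, ∀ D : Finset ℕ, 2 ≤ s → 1 ≤ a → a < b →
        D ⊆ Finset.range s → D.Nonempty →
        ∀ ξ : ℤ, ξ ≠ 0 →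
          ‖Bstar s a b D ξ - 1‖ ≤ C₀ * min 1 (|(ξ : ℝ)| / (s : ℝ) ^ a) ∧
          ∀ ε : ℝ, ε ∈ Set.Ioo (0 : ℝ) 1 →
            ‖(ε : ℂ) * oneHat ((ξ : ℝ) / (s : ℝ) ^ b) * (Bstar s a b D ξ - 1)‖ ≤
              C₀ * min 1 ((s : ℝ) ^ b / |(ξ : ℝ)|) * min 1 (|(ξ : ℝ)| / (s : ℝ) ^ a) := by
  refine ⟨2 * π, two_pi_pos, fun s a b D hs _ hab hD hDne ξ hξ => ?_⟩
  have hs' : 0 < s := by omega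
  have hB := norm_Bstar_sub_one_le hs' hab.le hD hDne ξ
  refine ⟨hB, fun ε hε => ?_⟩
  have hθ : (ξ : ℝ) / (s : ℝ) ^ b ≠ 0 := by positivity
  have hOne : ‖oneHat ((ξ : ℝ) / (s : ℝ) ^ b)‖ ≤ min 1 ((s : ℝ) ^ b / |(ξ : ℝ)|) := by
    simpa [abs_div] using norm_oneHat_le _ hθ
  have hε' : ‖(ε : ℂ)‖ ≤ 1 := by
    rw [Complex.norm_real, Real.norm_of_nonneg hε.1.le]; exact hε.2.le
  rw [norm_mul, norm_mul]
  calc ‖(ε : ℂ)‖ * ‖oneHat ((ξ : ℝ) / (s : ℝ) ^ b)‖ * ‖Bstar s a b D ξ - 1‖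
      ≤ 1 * min 1 ((s : ℝ) ^ b / |(ξ : ℝ)|) * (2 * π * min 1 (|(ξ : ℝ)| / (s : ℝ) ^ a)) := by
        gcongr
    _ = 2 * π * min 1 ((s : ℝ) ^ b / |(ξ : ℝ)|) * min 1 (|(ξ : ℝ)| / (s : ℝ) ^ a) := by ring
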